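/- arXiv:2405.16576 — 3 statements merged into one kernel-verified Lean document; each statement's English description precedes it below -/
import Mathlib

section
/- For every x in the interval [2/3, 1], there exists a sequence (α_n) with each α_n ∈ {0, 2, 3, 5} such that x = ∑_{n=1}^∞ α_n / 4^n. Equivalently, the interval [2/3, 1] is contained in the Guthrie-Nymann set X. -/
/-!
Every integer `n` with `2 * 4 ^ k ≤ 3 * n + 2` and `n < 4 ^ k` is a `k`-digit base-`4` number
with digits in `{0, 2, 3, 5}`: the residue of `n` modulo `4` picks the last digit, and
since `4 ^ k ≡ 1 [MOD 3]` the remaining digits again form such an integer for `k - 1`. Hence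
`n / 4 ^ k ∈ GN`, and these points are dense in `[2/3, 1]`. Finally `GN` is closed, being the
image of the compact space of digit sequences under a continuous map.
-/

/-- The Guthrie-Nymann set. -/
def GN : Set ℝ :=
  {x | ∃ α : ℕ → ℝ, (∀ n, α n ∈ ({0, 2, 3, 5} : Set ℝ)) ∧
    HasSum (fun n => α n / 4 ^ (n + 1)) x}

open Filter Topology

theorem isClosed_setOf_hasSum_div_pow {D : Set ℝ} (hD : IsCompact D) {b : ℝ} (hb : 1 < b) :
    IsClosed {x | ∃ α : ℕ → ℝ, (∀ n, α n ∈ D) ∧ HasSum (fun n => α n / b ^ (n + 1)) x} := by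
  have : CompactSpace D := isCompact_iff_compactSpace.mp hD
  have hb₀ : 0 < b := by linarith
  obtain ⟨C, hC⟩ := hD.isBounded.exists_norm_le
  have hsummable : Summable fun n : ℕ => C / b ^ (n + 1) := by
    refine ((summable_geometric_of_lt_one (inv_nonneg.mpr hb₀.le)
      (inv_lt_one_of_one_lt₀ hb)).mul_left (C / b)).congr fun n => ?_
    rw [pow_succ, inv_pow]
    field_simp
  have hbound (n : ℕ) (α : ℕ → D) : ‖(α n : ℝ) / b ^ (n + 1)‖ ≤ C / b ^ (n + 1) := by
    rw [norm_div, Real.norm_of_nonneg (pow_pos hb₀ (n + 1)).le]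
    exact div_le_div_of_nonneg_right (hC _ (α n).2) (pow_pos hb₀ (n + 1)).le
  let φ : (ℕ → D) → ℝ := fun α => ∑' n, (α n : ℝ) / b ^ (n + 1)
  have hφ : Continuous φ := continuous_tsum
    (fun n => (continuous_subtype_val.comp (continuous_apply n)).div_const _) hsummable hbound
  convert (isCompact_range hφ).isClosed
  ext x
  constructor
  · rintro ⟨α, hα, hx⟩
    exact ⟨fun n => ⟨α n, hα n⟩, hx.tsum_eq⟩
  · rintro ⟨α, rfl⟩
    exact ⟨fun n => α n, fun n => (α n).2,
      (hsummable.of_norm_bounded (hbound · α)).hasSum⟩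

theorem isClosed_GN : IsClosed GN :=
  isClosed_setOf_hasSum_div_pow (Set.toFinite _).isCompact (by norm_num)

theorem zero_mem_GN : (0 : ℝ) ∈ GN :=
  ⟨0, fun _ => by simp, by simp [hasSum_zero]⟩

theorem digit_add_div_four_mem_GN {d y : ℝ} (hd : d ∈ ({0, 2, 3, 5} : Set ℝ)) (hy : y ∈ GN) :
    (d + y) / 4 ∈ GN := by
  obtain ⟨α, hα, hsum⟩ := hy
  let β : ℕ → ℝ := fun | 0 => d | n + 1 => α n
  refine ⟨β, fun | 0 => hd | n + 1 => hα n, ?_⟩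
  have htail : HasSum (fun n => β (n + 1) / 4 ^ (n + 1 + 1)) (y / 4) := by
    refine (hsum.div_const 4).congr_fun fun n => ?_
    rw [pow_succ (4 : ℝ) (n + 1), div_div]
  have hsum' := (hasSum_nat_add_iff (f := fun n => β n / 4 ^ (n + 1)) 1).mp htail
  rwa [Finset.sum_range_one, show y / 4 + β 0 / 4 ^ (0 + 1) = (d + y) / 4 by ring] at hsum'

theorem exists_eq_four_mul_add_digit {k n : ℕ} (hlow : 2 * 4 ^ (k + 1) ≤ 3 * n + 2)
    (hhigh : n < 4 ^ (k + 1)) :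
    ∃ d m, (d = 0 ∨ d = 2 ∨ d = 3 ∨ d = 5) ∧ n = 4 * m + d ∧
      2 * 4 ^ k ≤ 3 * m + 2 ∧ m < 4 ^ k := by
  have hmod : 4 ^ k % 3 = 1 := by simp [Nat.pow_mod]
  rw [pow_succ] at hlow hhigh
  rcases (by omega : n % 4 = 0 ∨ n % 4 = 1 ∨ n % 4 = 2 ∨ n % 4 = 3) with h | h | h | h
  · exact ⟨0, n / 4, by omega, by omega, by omega, by omega⟩
  · exact ⟨5, (n - 5) / 4, by omega, by omega, by omega, by omega⟩
  · exact ⟨2, (n - 2) / 4, by omega, by omega, by omega, by omega⟩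
  · exact ⟨3, (n - 3) / 4, by omega, by omega, by omega, by omega⟩

theorem nat_add_div_four_pow_mem_GN {k n : ℕ} (hlow : 2 * 4 ^ k ≤ 3 * n + 2) (hhigh : n < 4 ^ k)
    {y : ℝ} (hy : y ∈ GN) : (n + y) / 4 ^ k ∈ GN := by
  induction k generalizing n y with
  | zero =>
    obtain rfl : n = 0 := by simpa using hhigh
    simpa using hy
  | succ k ih =>
    obtain ⟨d, m, hd, rfl, hlow', hhigh'⟩ := exists_eq_four_mul_add_digit hlow hhigh
    have hd' : (d : ℝ) ∈ ({0, 2, 3, 5} : Set ℝ) := by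
      rcases hd with rfl | rfl | rfl | rfl <;> norm_num
    convert ih hlow' hhigh' (digit_add_div_four_mem_GN hd' hy) using 1
    push_cast
    field_simp
    ring

theorem Ico_subset_GN : Set.Ico (2 / 3 : ℝ) 1 ⊆ GN := by
  rintro x ⟨hx₁, hx₂⟩
  have hlim : Tendsto (fun k : ℕ => (⌊x * 4 ^ k⌋₊ : ℝ) / 4 ^ k) atTop (𝓝 x) :=
    (tendsto_nat_floor_mul_div_atTop (by linarith)).comp
      (tendsto_pow_atTop_atTop_of_one_lt (by norm_num))
  refine isClosed_GN.mem_of_tendsto hlim (Eventually.of_forall fun k => ?_)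
  have h4 : (0 : ℝ) < 4 ^ k := by positivity
  have hlow : 2 * 4 ^ k ≤ 3 * ⌊x * 4 ^ k⌋₊ + 2 := by
    have hfloor := Nat.lt_floor_add_one (x * 4 ^ k)
    have hreal : (2 * 4 ^ k : ℝ) < 3 * ⌊x * 4 ^ k⌋₊ + 3 := by nlinarith
    have hnat : 2 * 4 ^ k < 3 * ⌊x * 4 ^ k⌋₊ + 3 := by exact_mod_cast hreal
    omega
  have hhigh : ⌊x * 4 ^ k⌋₊ < 4 ^ k :=
    (Nat.floor_lt (by positivity)).mpr (by push_cast; nlinarith)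
  simpa using nat_add_div_four_pow_mem_GN hlow hhigh zero_mem_GN

theorem Icc_subset_GN : Set.Icc (2 / 3 : ℝ) 1 ⊆ GN := by
  rw [← closure_Ico (by norm_num)]
  exact isClosed_GN.closure_subset_iff.mpr Ico_subset_GN
end

section
/- The sets C_n^l = ∑_{i=1}^{n-1} 2/4^i + (1/4^n)·X, for n ∈ ℕ, n ≥ 1, are pairwise disjoint, and each is disjoint from the interval [2/3, 1]. -/
/-- The left affine copy `C_n^l = ∑_{i=1}^{n-1} 2/4^i + (1/4^n)·X`. -/
def Cl (n : ℕ) : Set ℝ :=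
  (fun x => (∑ i ∈ Finset.range (n - 1), (2 : ℝ) / 4 ^ (i + 1)) + x / 4 ^ n) '' GN

lemma hasSum_div_four_pow_succ (d : ℝ) : HasSum (fun n : ℕ => d / 4 ^ (n + 1)) (d / 3) := by
  have h := (hasSum_geometric_of_lt_one (r := (1 / 4 : ℝ)) (by norm_num) (by norm_num)).mul_left
    (d / 4)
  rw [show d / 4 * (1 - 1 / 4)⁻¹ = d / 3 by norm_num; ring] at h
  refine h.congr_fun fun n => ?_
  rw [pow_succ, one_div, inv_pow]
  ring

lemma GN_subset_Icc : GN ⊆ Set.Icc 0 (5 / 3) := by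
  rintro x ⟨α, hα, hx⟩
  have hα_bounds (n : ℕ) : 0 ≤ α n ∧ α n ≤ 5 := by
    have h := hα n
    simp only [Set.mem_insert_iff, Set.mem_singleton_iff] at h
    rcases h with h | h | h | h <;> rw [h] <;> norm_num
  constructor
  · exact hasSum_le (fun n => div_nonneg (hα_bounds n).1 (by positivity)) hasSum_zero hx
  · refine hasSum_le (fun n => ?_) hx (hasSum_div_four_pow_succ 5)
    gcongr
    exact (hα_bounds n).2

lemma sum_range_two_div_four_pow_succ (m : ℕ) :
    ∑ i ∈ Finset.range m, (2 : ℝ) / 4 ^ (i + 1) = 2 / 3 - 2 / 3 / 4 ^ m := by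
  induction m with
  | zero => norm_num
  | succ m ih =>
    rw [Finset.sum_range_succ, ih]
    field_simp
    ring

lemma Cl_succ_subset_Ioc (m : ℕ) :
    Cl (m + 1) ⊆ Set.Ioc (2 / 3 - 1 / 4 ^ m) (2 / 3 - 1 / 4 ^ (m + 1)) := by
  rintro _ ⟨x, hx, rfl⟩
  obtain ⟨hx_nonneg, hx_le⟩ := GN_subset_Icc hx
  simp only [Nat.add_sub_cancel, sum_range_two_div_four_pow_succ]
  have h_pos : (0 : ℝ) < 4 ^ m := by positivity
  rw [Set.mem_Ioc, pow_succ]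
  constructor
  · rw [← sub_pos]
    field_simp
    linarith
  · rw [← sub_nonneg]
    field_simp
    linarith

lemma monotone_two_thirds_sub_inv_four_pow : Monotone fun m : ℕ => (2 / 3 : ℝ) - 1 / 4 ^ m :=
  monotone_nat_of_le_succ fun m => by
    simp only [sub_le_sub_iff_left]
    gcongr <;> norm_num

theorem Cl_pairwise_disjoint :
    (∀ k n : ℕ, 1 ≤ k → 1 ≤ n → k ≠ n → Disjoint (Cl k) (Cl n)) ∧
      (∀ n : ℕ, 1 ≤ n → Disjoint (Cl n) (Set.Icc (2 / 3 : ℝ) 1)) := by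
  constructor
  · rintro k n hk hn hkn
    obtain ⟨a, rfl⟩ := Nat.exists_eq_add_of_le' hk
    obtain ⟨b, rfl⟩ := Nat.exists_eq_add_of_le' hn
    exact (monotone_two_thirds_sub_inv_four_pow.pairwise_disjoint_on_Ioc_succ
      (by omega : a ≠ b)).mono (Cl_succ_subset_Ioc a) (Cl_succ_subset_Ioc b)
  · rintro n hn
    obtain ⟨m, rfl⟩ := Nat.exists_eq_add_of_le' hn
    refine (Set.Iic_disjoint_Ici.mpr ?_).mono
      ((Cl_succ_subset_Ioc m).trans Set.Ioc_subset_Iic_self) Set.Icc_subset_Ici_self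
    simp only [not_le, sub_lt_self_iff]
    positivity
end

section
/- The Hausdorff dimension of the boundary of the Guthrie-Nymann set X equals log 3 / log 4. -/
open Set Filter Topology
open scoped NNReal ENNReal

def digitSet (b : ℝ) (D : Set ℝ) : Set ℝ :=
  {x | ∃ α : ℕ → ℝ, (∀ n, α n ∈ D) ∧ HasSum (fun n => α n / b ^ (n + 1)) x}

noncomputable def digitVal (b : ℝ) (α : ℕ → ℝ) : ℝ := ∑' n, α n / b ^ (n + 1)

theorem Icc_zero_one_subset_of_isClosed {b : ℕ} (hb : 1 < b) {K : Set ℝ} (hK : IsClosed K)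
    (h0 : 0 ∈ K) (h : ∀ d < b, ∀ t ∈ K, (d + t) / b ∈ K) : Icc 0 1 ⊆ K := by
  have hadic (n : ℕ) : ∀ m < b ^ n, (m : ℝ) / b ^ n ∈ K := by
    induction n with
    | zero =>
      intro m hm
      obtain rfl : m = 0 := by simpa using hm
      simpa using h0
    | succ n ih =>
      intro m hm
      have hd : m / b ^ n < b := Nat.div_lt_of_lt_mul (by rwa [← pow_succ])
      convert h _ hd _ (ih (m % b ^ n) (Nat.mod_lt _ (by positivity))) using 1
      have hm : (m : ℝ) = (m / b ^ n : ℕ) * b ^ n + (m % b ^ n : ℕ) := by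
        exact_mod_cast (Nat.div_add_mod' m (b ^ n)).symm
      rw [hm]
      field_simp
      ring
  have hIco : Ico 0 1 ⊆ K := by
    rintro t ⟨ht0, ht1⟩
    have hlim : Tendsto (fun n : ℕ => (⌊t * b ^ n⌋₊ : ℝ) / b ^ n) atTop (𝓝 t) :=
      (tendsto_nat_floor_mul_div_atTop ht0).comp
        (tendsto_pow_atTop_atTop_of_one_lt (by exact_mod_cast hb))
    refine hK.mem_of_tendsto hlim (Eventually.of_forall fun n => ?_)
    have hlt : ⌊t * b ^ n⌋₊ < b ^ n := by
      rw [Nat.floor_lt (by positivity)]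
      push_cast
      nlinarith [pow_pos (by positivity : (0 : ℝ) < b) n]
    simpa using hadic n _ hlt
  rw [← closure_Ico zero_ne_one]
  exact hK.closure_subset_iff.mpr hIco

open Metric in
theorem dimH_le_of_forall_cover {X : Type*} [EMetricSpace X] {s : Set X} {ι : ℕ → Type*}
    [∀ n, Fintype (ι n)] (t : ∀ n, ι n → Set X) (hcover : ∀ n, s ⊆ ⋃ i, t n i)
    {m : ℕ} (hcard : ∀ n, Fintype.card (ι n) ≤ m ^ n) {ρ : ℝ} (hρ0 : 0 ≤ ρ) (hρ1 : ρ < 1)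
    {C : ℝ≥0∞} (hC : C ≠ ∞) (hdiam : ∀ n i, ediam (t n i) ≤ C * ENNReal.ofReal (ρ ^ n))
    {d : ℝ≥0} (hmρ : m * ρ ^ (d : ℝ) ≤ 1) : dimH s ≤ d := by
  borelize X
  have hr : Tendsto (fun n : ℕ => C * ENNReal.ofReal (ρ ^ n)) atTop (𝓝 0) := by
    simpa using ENNReal.Tendsto.const_mul
      (ENNReal.tendsto_ofReal (tendsto_pow_atTop_nhds_zero_of_lt_one hρ0 hρ1)) (Or.inr hC)
  have hsum (n : ℕ) : ∑ i, ediam (t n i) ^ (d : ℝ) ≤ C ^ (d : ℝ) := calc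
    ∑ i, ediam (t n i) ^ (d : ℝ) ≤ ∑ _i : ι n, (C * ENNReal.ofReal (ρ ^ n)) ^ (d : ℝ) :=
      Finset.sum_le_sum fun i _ => ENNReal.rpow_le_rpow (hdiam n i) d.coe_nonneg
    _ ≤ m ^ n * (C ^ (d : ℝ) * ENNReal.ofReal ((ρ ^ (d : ℝ)) ^ n)) := by
      rw [Finset.sum_const, Finset.card_univ, nsmul_eq_mul,
        ENNReal.mul_rpow_of_nonneg _ _ d.coe_nonneg,
        ENNReal.ofReal_rpow_of_nonneg (by positivity) d.coe_nonneg,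
        ← Real.rpow_natCast, ← Real.rpow_mul hρ0, mul_comm (n : ℝ), Real.rpow_mul hρ0,
        Real.rpow_natCast]
      gcongr
      exact_mod_cast hcard n
    _ = C ^ (d : ℝ) * ENNReal.ofReal ((m * ρ ^ (d : ℝ)) ^ n) := by
      rw [mul_pow, ENNReal.ofReal_mul (by positivity), ENNReal.ofReal_pow (Nat.cast_nonneg m),
        ENNReal.ofReal_natCast]
      ring
    _ ≤ C ^ (d : ℝ) := by
      refine mul_le_of_le_one_right' (ENNReal.ofReal_le_one.mpr ?_)
      exact pow_le_one₀ (by positivity) hmρ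
  apply dimH_le_of_hausdorffMeasure_ne_top
  refine ne_top_of_le_ne_top (ENNReal.rpow_ne_top_of_nonneg d.coe_nonneg hC) ?_
  refine (MeasureTheory.Measure.hausdorffMeasure_le_liminf_sum _ s _ hr t
    (Eventually.of_forall hdiam) (Eventually.of_forall hcover)).trans ?_
  exact liminf_le_of_frequently_le' (Frequently.of_forall hsum)

theorem dimH_image_le_of_dist_le {X Y Z : Type*} [MetricSpace Y] [MetricSpace Z] {f : X → Y}
    {g : X → Z} {s : Set X} {C r : ℝ≥0} (hr : 0 < r)
    (h : ∀ a ∈ s, ∀ a' ∈ s, dist (f a) (f a') ≤ C * dist (g a) (g a') ^ (r : ℝ)) :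
    dimH (f '' s) ≤ dimH (g '' s) / r := by
  rcases s.eq_empty_or_nonempty with rfl | ⟨a₀, -⟩
  · simp
  have : Nonempty X := ⟨a₀⟩
  have hF (a : X) (ha : a ∈ s) : f (Function.invFunOn g s (g a)) = f a := by
    have hinv : ∃ a' ∈ s, g a' = g a := ⟨a, ha, rfl⟩
    have := h _ (Function.invFunOn_mem hinv) a ha
    rwa [Function.invFunOn_eq hinv, dist_self, Real.zero_rpow (by positivity), mul_zero,
      dist_le_zero] at this
  have hholder : HolderOnWith C r (f ∘ Function.invFunOn g s) (g '' s) := by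
    rintro _ ⟨a, ha, rfl⟩ _ ⟨a', ha', rfl⟩
    rw [Function.comp_apply, Function.comp_apply, hF a ha, hF a' ha', edist_dist, edist_dist,
      ENNReal.ofReal_rpow_of_nonneg dist_nonneg r.coe_nonneg, ← ENNReal.ofReal_coe_nnreal,
      ← ENNReal.ofReal_mul C.coe_nonneg]
    exact ENNReal.ofReal_le_ofReal (h a ha a' ha')
  have himage : (f ∘ Function.invFunOn g s) '' (g '' s) = f '' s := by
    rw [image_image]
    exact image_congr hF
  rw [← himage]
  exact hholder.dimH_image_le hr

namespace digitSet

variable {b : ℝ} {D : Set ℝ}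

lemma hasSum_const_div (hb : 1 < b) (c : ℝ) :
    HasSum (fun n : ℕ => c / b ^ (n + 1)) (c / (b - 1)) := by
  have h := (hasSum_geometric_of_lt_one (by positivity) (inv_lt_one_of_one_lt₀ hb)).mul_left (c / b)
  have hb1 : b - 1 ≠ 0 := by linarith
  have e : (fun n : ℕ => c / b ^ (n + 1)) = fun n => c / b * b⁻¹ ^ n := by
    funext n; rw [inv_pow, pow_succ]; field_simp
  have hsum : c / b * (1 - b⁻¹)⁻¹ = c / (b - 1) := by
    have hb0 : b ≠ 0 := by positivity
    rw [show 1 - b⁻¹ = (b - 1) / b by field_simp]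
    field_simp
  rwa [e, ← hsum]

lemma summable_of_abs_le (hb : 1 < b) {α : ℕ → ℝ} {M : ℝ} (hα : ∀ n, |α n| ≤ M) :
    Summable fun n => α n / b ^ (n + 1) := by
  refine (hasSum_const_div hb M).summable.of_norm_bounded fun n => ?_
  have : 0 < b ^ (n + 1) := by have := hb.le; positivity
  rw [Real.norm_eq_abs, abs_div, abs_of_pos this]
  exact div_le_div_of_nonneg_right (hα n) this.le

lemma hasSum_iff_tail (hb : b ≠ 0) {α : ℕ → ℝ} {x : ℝ} :
    HasSum (fun n => α n / b ^ (n + 1)) x ↔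
      HasSum (fun n => α (n + 1) / b ^ (n + 1)) (x * b - α 0) := by
  rw [← hasSum_nat_add_iff' 1, ← hasSum_mul_right_iff hb]
  have e : (fun n => α (n + 1) / b ^ (n + 1 + 1) * b) = fun n => α (n + 1) / b ^ (n + 1) := by
    funext n; rw [pow_succ]; field_simp
  rw [e, Finset.sum_range_one, zero_add, pow_one, sub_mul, div_mul_cancel₀ _ hb]

theorem mem_iff (hb : b ≠ 0) {x : ℝ} :
    x ∈ digitSet b D ↔ ∃ d ∈ D, ∃ y ∈ digitSet b D, x = (d + y) / b := by
  constructor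
  · rintro ⟨α, hαD, hα⟩
    refine ⟨α 0, hαD 0, _, ⟨fun n => α (n + 1), fun n => hαD _, (hasSum_iff_tail hb).mp hα⟩, ?_⟩
    field_simp
    ring
  · rintro ⟨d, hd, y, ⟨α, hαD, hα⟩, rfl⟩
    refine ⟨fun n => Nat.casesOn n d α, fun n => n.casesOn hd hαD, (hasSum_iff_tail hb).mpr ?_⟩
    convert hα using 1
    field_simp
    simp

theorem subset_Icc (hb : 1 < b) {M : ℝ} (hD : D ⊆ Icc 0 M) :
    digitSet b D ⊆ Icc 0 (M / (b - 1)) := by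
  rintro x ⟨α, hαD, hα⟩
  have hpow (n : ℕ) : 0 < b ^ (n + 1) := by have := hb.le; positivity
  exact ⟨hasSum_le (fun n => div_nonneg (hD (hαD n)).1 (hpow n).le) hasSum_zero hα,
    hasSum_le (fun n => div_le_div_of_nonneg_right (hD (hαD n)).2 (hpow n).le) hα
      (hasSum_const_div hb M)⟩

theorem eq_image (hb : 1 < b) (hD : Bornology.IsBounded D) :
    digitSet b D = digitVal b '' univ.pi fun _ => D := by
  obtain ⟨M, hM⟩ := hD.exists_norm_le
  ext x
  constructor
  · rintro ⟨α, hαD, hα⟩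
    exact ⟨α, fun n _ => hαD n, hα.tsum_eq⟩
  · rintro ⟨α, hαD, rfl⟩
    exact ⟨α, fun n => hαD n trivial,
      (summable_of_abs_le hb fun n => hM _ (hαD n trivial)).hasSum⟩

theorem isCompact (hb : 1 < b) (hD : IsCompact D) : IsCompact (digitSet b D) := by
  obtain ⟨M, hM⟩ := hD.isBounded.exists_norm_le
  rw [eq_image hb hD.isBounded]
  refine (isCompact_univ_pi fun _ => hD).image_of_continuousOn
    (continuousOn_tsum (fun n => (continuous_apply n).div_const _ |>.continuousOn)
      (hasSum_const_div hb M).summable fun n α hα => ?_)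
  have : 0 < b ^ (n + 1) := by have := hb.le; positivity
  rw [norm_div, Real.norm_of_nonneg this.le]
  exact div_le_div_of_nonneg_right (hM _ (hα n trivial)) this.le

theorem zero_mem (h0 : (0 : ℝ) ∈ D) : (0 : ℝ) ∈ digitSet b D :=
  ⟨0, fun _ => h0, by simp [hasSum_zero]⟩

theorem subset_of_forall_exists (hb : 1 < b) {S : Set ℝ} (hS : Bornology.IsBounded S)
    (h : ∀ s ∈ S, ∃ d ∈ D, ∃ s' ∈ S, s = (d + s') / b) : S ⊆ digitSet b D := by
  choose! d hd next hnext heq using h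
  obtain ⟨M, hM⟩ := hS.exists_norm_le
  intro s hs
  set o : ℕ → ℝ := fun n => next^[n] s with ho_def
  have ho (n : ℕ) : o n ∈ S := MapsTo.iterate hnext n hs
  have ho_succ (n : ℕ) : o (n + 1) = next (o n) := Function.iterate_succ_apply' next n s
  have hb0 : 0 < b := by linarith
  have hpartial (n : ℕ) : ∑ k ∈ Finset.range n, d (o k) / b ^ (k + 1) = s - o n / b ^ n := by
    induction n with
    | zero => simp [ho_def]
    | succ n ih =>
      rw [Finset.sum_range_succ, ih, ho_succ]
      nth_rewrite 1 [heq (o n) (ho n)]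
      rw [pow_succ]
      field_simp
      ring
  have hdigit (n : ℕ) : |d (o n)| ≤ b * M + M := by
    have h1 := hM _ (ho n)
    have h2 := hM _ (hnext _ (ho n))
    have e : d (o n) = b * o n - next (o n) := by
      have := heq (o n) (ho n); field_simp at this; linarith
    rw [e]
    calc |b * o n - next (o n)| ≤ |b * o n| + |next (o n)| := abs_sub _ _
      _ ≤ b * M + M := by
        rw [abs_mul, abs_of_pos hb0]
        exact add_le_add (mul_le_mul_of_nonneg_left h1 hb0.le) h2
  refine ⟨fun n => d (o n), fun n => hd _ (ho n), ?_⟩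
  rw [(summable_of_abs_le hb hdigit).hasSum_iff_tendsto_nat]
  simp_rw [hpartial]
  have hrem : Tendsto (fun n => o n / b ^ n) atTop (𝓝 0) := by
    refine squeeze_zero_norm (fun n => ?_) (by simpa using (tendsto_pow_atTop_nhds_zero_of_lt_one
      (inv_nonneg.mpr hb0.le) (inv_lt_one_of_one_lt₀ hb)).const_mul M)
    rw [norm_div, norm_pow, Real.norm_of_nonneg hb0.le, div_eq_mul_inv]
    exact mul_le_mul_of_nonneg_right (hM _ (ho n)) (by positivity)
  simpa using hrem.const_sub s

lemma digitVal_mem (hb : 1 < b) (hD : Bornology.IsBounded D) {α : ℕ → ℝ}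
    (hα : α ∈ univ.pi fun _ => D) : digitVal b α ∈ digitSet b D :=
  eq_image hb hD ▸ mem_image_of_mem _ hα

lemma digitVal_eq (hb : 1 < b) (hD : Bornology.IsBounded D) {α : ℕ → ℝ}
    (hα : α ∈ univ.pi fun _ => D) :
    digitVal b α = (α 0 + digitVal b fun n => α (n + 1)) / b := by
  obtain ⟨M, hM⟩ := hD.exists_norm_le
  have hsum := (summable_of_abs_le hb fun n => hM _ (hα n trivial)).hasSum
  have htail := ((hasSum_iff_tail (by positivity)).mp hsum).tsum_eq
  have hb0 : b ≠ 0 := by positivity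
  simp only [digitVal] at htail ⊢
  rw [htail]
  field_simp
  ring

lemma exists_finset_cover (hb : b ≠ 0) (D : Finset ℝ) (n : ℕ) :
    ∃ L : Finset ℝ, L.card ≤ D.card ^ n ∧
      ∀ x ∈ digitSet b D, ∃ p ∈ L, ∃ y ∈ digitSet b D, x = p + y / b ^ n := by
  classical
  induction n with
  | zero => exact ⟨{0}, by simp, fun x hx => ⟨0, by simp, x, hx, by simp⟩⟩
  | succ n ih =>
    obtain ⟨L, hLcard, hL⟩ := ih
    refine ⟨Finset.image₂ (fun d p => (d + p) / b) D L, ?_, fun x hx => ?_⟩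
    · calc _ ≤ D.card * L.card := Finset.card_image₂_le _ _ _
        _ ≤ D.card ^ (n + 1) := by rw [pow_succ']; gcongr
    obtain ⟨d, hd, y, hy, rfl⟩ := (mem_iff hb).mp hx
    obtain ⟨p, hp, z, hz, rfl⟩ := hL y hy
    refine ⟨(d + p) / b, Finset.mem_image₂_of_mem hd hp, z, hz, ?_⟩
    rw [pow_succ]
    field_simp
    ring

theorem dimH_le (hb : 1 < b) (D : Finset ℝ) :
    dimH (digitSet b D) ≤ ENNReal.ofReal (Real.logb b D.card) := by
  have hb0 : 0 < b := by linarith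
  choose L hLcard hLcover using exists_finset_cover hb0.ne' D
  have hK : IsCompact (digitSet b D) := isCompact hb D.finite_toSet.isCompact
  refine dimH_le_of_forall_cover (ι := fun n => L n)
    (fun n p => (fun y => (p : ℝ) + y / b ^ n) '' digitSet b D) (fun n x hx => ?_)
    (m := D.card) (fun n => by simpa using hLcard n) (inv_nonneg.mpr hb0.le)
    (inv_lt_one_of_one_lt₀ hb) hK.isBounded.ediam_ne_top (fun n p => ?_) ?_
  · obtain ⟨p, hp, y, hy, rfl⟩ := hLcover n x hx
    exact mem_iUnion.mpr ⟨⟨p, hp⟩, y, hy, rfl⟩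
  · have hlip : LipschitzWith ((b⁻¹) ^ n).toNNReal fun y => (p : ℝ) + y / b ^ n := by
      refine LipschitzWith.of_dist_le_mul fun x y => ?_
      rw [Real.coe_toNNReal _ (by positivity), Real.dist_eq, Real.dist_eq,
        add_sub_add_left_eq_sub, ← sub_div, abs_div, abs_of_pos (pow_pos hb0 n), inv_pow,
        div_eq_inv_mul]
    rw [mul_comm]
    exact hlip.ediam_image_le _
  · rcases Nat.eq_zero_or_pos D.card with h | h
    · simp [h]
    rw [Real.coe_toNNReal _ (Real.logb_nonneg hb (by exact_mod_cast h)), Real.inv_rpow hb0.le,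
      Real.rpow_logb hb0 hb.ne' (by positivity), mul_inv_cancel₀ (by positivity)]

end digitSet

def ternarySeqs : Set (ℕ → ℝ) := univ.pi fun _ => {0, 1, 2}

def E : Set ℝ := digitSet 4 {0, 1, 2}

lemma digitSet_ternary_subset_Icc {b : ℝ} (hb : 1 < b) :
    digitSet b {0, 1, 2} ⊆ Icc 0 (2 / (b - 1)) :=
  digitSet.subset_Icc hb (by intro x hx; rcases hx with rfl | rfl | rfl <;> norm_num)

lemma logb_four_three_le_one : Real.logb 4 3 ≤ 1 := by
  rw [← Real.logb_self_eq_one (b := 4) (by norm_num)]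
  exact Real.logb_le_logb_of_le (by norm_num) (by norm_num) (by norm_num)

namespace ternarySeqs

variable {α β : ℕ → ℝ}

lemma isBounded_digits : Bornology.IsBounded ({0, 1, 2} : Set ℝ) :=
  (toFinite _).isBounded

lemma tail_mem (hα : α ∈ ternarySeqs) : (fun n => α (n + 1)) ∈ ternarySeqs :=
  fun n _ => hα (n + 1) trivial

lemma digitVal_mem_Icc {b : ℝ} (hb : 1 < b) (hα : α ∈ ternarySeqs) :
    digitVal b α ∈ Icc 0 (2 / (b - 1)) :=
  digitSet_ternary_subset_Icc hb (digitSet.digitVal_mem hb isBounded_digits hα)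

lemma one_div_twelve_le_abs_digitVal_sub (hα : α ∈ ternarySeqs) (hβ : β ∈ ternarySeqs)
    (h0 : α 0 ≠ β 0) : 1 / 12 ≤ |digitVal 4 α - digitVal 4 β| := by
  rw [digitSet.digitVal_eq (by norm_num) isBounded_digits hα,
    digitSet.digitVal_eq (by norm_num) isBounded_digits hβ]
  obtain ⟨hx0, hx1⟩ := digitVal_mem_Icc (b := 4) (by norm_num) (tail_mem hα)
  obtain ⟨hy0, hy1⟩ := digitVal_mem_Icc (b := 4) (by norm_num) (tail_mem hβ)
  norm_num at hx1 hy1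
  rcases hα 0 trivial with h | h | h <;> rcases hβ 0 trivial with h' | h' | h' <;>
    rw [h, h'] at h0 ⊢ <;> norm_num at h0 <;> rw [le_abs] <;>
    first | (left; linarith) | (right; linarith)

lemma abs_digitVal_sub_le_of_head_ne (hα : α ∈ ternarySeqs) (hβ : β ∈ ternarySeqs)
    (h0 : α 0 ≠ β 0) :
    |digitVal 3 α - digitVal 3 β| ≤ 9 * |digitVal 4 α - digitVal 4 β| ^ Real.logb 4 3 := by
  obtain ⟨hx0, hx1⟩ := digitVal_mem_Icc (b := 3) (by norm_num) hα
  obtain ⟨hy0, hy1⟩ := digitVal_mem_Icc (b := 3) (by norm_num) hβ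
  norm_num at hx1 hy1
  have h3 : (3 : ℝ) ^ Real.logb 4 3 ≤ 3 := by
    simpa using Real.rpow_le_rpow_of_exponent_le (by norm_num : (1 : ℝ) ≤ 3)
      logb_four_three_le_one
  have h12 : (12 : ℝ) ^ Real.logb 4 3 ≤ 9 := by
    rw [show (12 : ℝ) = 3 * 4 by norm_num, Real.mul_rpow (by norm_num) (by norm_num),
      Real.rpow_logb (by norm_num) (by norm_num) (by norm_num)]
    linarith
  have hpos : 0 < (12 : ℝ) ^ Real.logb 4 3 := by positivity
  calc |digitVal 3 α - digitVal 3 β| ≤ 1 := by rw [abs_le]; constructor <;> linarith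
    _ ≤ 9 * (1 / 12) ^ Real.logb 4 3 := by
      rw [Real.div_rpow (by norm_num) (by norm_num), Real.one_rpow, mul_one_div,
        le_div_iff₀ hpos]
      linarith
    _ ≤ 9 * |digitVal 4 α - digitVal 4 β| ^ Real.logb 4 3 := by
      gcongr
      · exact Real.logb_nonneg (by norm_num) (by norm_num)
      · exact one_div_twelve_le_abs_digitVal_sub hα hβ h0

/-- A common first digit divides the left side by `3` and the right side by `4 ^ logb 4 3 = 3`. -/
lemma abs_digitVal_sub_le_of_tail (hα : α ∈ ternarySeqs) (hβ : β ∈ ternarySeqs)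
    (h0 : α 0 = β 0)
    (htail : |digitVal 3 (fun n => α (n + 1)) - digitVal 3 (fun n => β (n + 1))| ≤
      9 * |digitVal 4 (fun n => α (n + 1)) - digitVal 4 (fun n => β (n + 1))| ^ Real.logb 4 3) :
    |digitVal 3 α - digitVal 3 β| ≤ 9 * |digitVal 4 α - digitVal 4 β| ^ Real.logb 4 3 := by
  rw [digitSet.digitVal_eq (by norm_num) isBounded_digits hα,
    digitSet.digitVal_eq (by norm_num) isBounded_digits hβ,
    digitSet.digitVal_eq (b := 4) (by norm_num) isBounded_digits hα,
    digitSet.digitVal_eq (b := 4) (by norm_num) isBounded_digits hβ, h0, ← sub_div, ← sub_div,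
    add_sub_add_left_eq_sub, add_sub_add_left_eq_sub, abs_div, abs_div,
    abs_of_pos (by norm_num : (0 : ℝ) < 3), abs_of_pos (by norm_num : (0 : ℝ) < 4),
    Real.div_rpow (abs_nonneg _) (by norm_num),
    Real.rpow_logb (by norm_num) (by norm_num) (by norm_num)]
  linarith

theorem abs_digitVal_sub_le (hα : α ∈ ternarySeqs) (hβ : β ∈ ternarySeqs) :
    |digitVal 3 α - digitVal 3 β| ≤ 9 * |digitVal 4 α - digitVal 4 β| ^ Real.logb 4 3 := by
  have key (N : ℕ) : ∀ α ∈ ternarySeqs, ∀ β ∈ ternarySeqs, α N ≠ β N →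
      |digitVal 3 α - digitVal 3 β| ≤ 9 * |digitVal 4 α - digitVal 4 β| ^ Real.logb 4 3 := by
    induction N with
    | zero => exact fun α hα β hβ => abs_digitVal_sub_le_of_head_ne hα hβ
    | succ N ih =>
      intro α hα β hβ hN
      by_cases h0 : α 0 = β 0
      · exact abs_digitVal_sub_le_of_tail hα hβ h0
          (ih _ (tail_mem hα) _ (tail_mem hβ) hN)
      · exact abs_digitVal_sub_le_of_head_ne hα hβ h0
  by_cases hαβ : α = β
  · subst hαβ
    simp only [sub_self, abs_zero]
    positivity
  obtain ⟨N, hN⟩ := Function.ne_iff.mp hαβ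
  exact key N α hα β hβ hN

end ternarySeqs

theorem Icc_subset_digitSet_three : Icc 0 1 ⊆ digitSet 3 {0, 1, 2} := by
  refine Icc_zero_one_subset_of_isClosed (b := 3) (by norm_num)
    (digitSet.isCompact (by norm_num) (toFinite _).isCompact).isClosed
    (digitSet.zero_mem (by simp)) fun d hd t ht => (digitSet.mem_iff (by norm_num)).mpr
      ⟨d, ?_, t, ht, by norm_num⟩
  interval_cases d <;> simp

theorem dimH_E : dimH E = ENNReal.ofReal (Real.logb 4 3) := by
  have hlog : 0 < Real.logb 4 3 := Real.logb_pos (by norm_num) (by norm_num)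
  apply le_antisymm
  · have h := digitSet.dimH_le (b := 4) (by norm_num) {0, 1, 2}
    have hcard : ({0, 1, 2} : Finset ℝ).card = 3 := by
      rw [Finset.card_insert_of_notMem (by norm_num), Finset.card_pair (by norm_num)]
    rw [hcard] at h
    simpa [E] using h
  · have hr : 0 < (Real.logb 4 3).toNNReal := Real.toNNReal_pos.mpr hlog
    have h := dimH_image_le_of_dist_le (f := digitVal 3) (g := digitVal 4) (s := ternarySeqs)
      (C := 9) hr fun a ha a' ha' => by
        rw [Real.coe_toNNReal _ hlog.le, Real.dist_eq, Real.dist_eq]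
        exact_mod_cast ternarySeqs.abs_digitVal_sub_le ha ha'
    rw [ternarySeqs, ← digitSet.eq_image (by norm_num) ternarySeqs.isBounded_digits,
      ← digitSet.eq_image (by norm_num) ternarySeqs.isBounded_digits] at h
    have h1 : 1 ≤ dimH (digitSet 3 {0, 1, 2}) := by
      calc (1 : ℝ≥0∞) = dimH (Icc (0 : ℝ) 1) := by
            rw [Real.dimH_of_nonempty_interior (by simp), Module.finrank_self, Nat.cast_one]
        _ ≤ _ := dimH_mono Icc_subset_digitSet_three
    have := (ENNReal.le_div_iff_mul_le (Or.inl (by simpa using hr.ne'))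
      (Or.inl ENNReal.coe_ne_top)).mp (h1.trans h)
    rwa [one_mul] at this

namespace GN

lemma subset_Icc : GN ⊆ Icc 0 (5 / 3) := by
  have h := digitSet.subset_Icc (b := 4) (D := {0, 2, 3, 5}) (M := 5) (by norm_num)
    (by intro x hx; rcases hx with rfl | rfl | rfl | rfl <;> norm_num)
  norm_num at h
  exact h

lemma isClosed : IsClosed GN :=
  (digitSet.isCompact (b := 4) (by norm_num) (toFinite {0, 2, 3, 5}).isCompact).isClosed

lemma mem_iff {x : ℝ} :
    x ∈ GN ↔ ∃ q ∈ ({0, 2, 3, 5} : Set ℝ), ∃ y ∈ GN, x = (q + y) / 4 :=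
  digitSet.mem_iff (by norm_num)

lemma floor_eq_zero_or_one {x : ℝ} (hx : x ∈ GN) : ⌊x⌋ = 0 ∨ ⌊x⌋ = 1 := by
  obtain ⟨hx0, hx1⟩ := subset_Icc hx
  have h0 : 0 ≤ ⌊x⌋ := Int.floor_nonneg.mpr hx0
  have h1 : ⌊x⌋ < 2 := Int.floor_lt.mpr (by push_cast; linarith)
  omega

lemma mem_of_eq {q y x : ℝ} (hq : q ∈ ({0, 2, 3, 5} : Set ℝ)) (hy : y ∈ GN)
    (hx : x = (q + y) / 4) : x ∈ GN :=
  mem_iff.mpr ⟨q, hq, y, hy, hx⟩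

theorem Icc_subset_union : Icc 0 1 ⊆ GN ∪ (· + 1) ⁻¹' GN := by
  refine Icc_zero_one_subset_of_isClosed (b := 4) (by norm_num)
    (isClosed.union (isClosed.preimage (continuous_add_const 1)))
    (Or.inl (digitSet.zero_mem (by simp))) fun d hd t ht => ?_
  simp only [mem_union, mem_preimage] at ht ⊢
  interval_cases d <;> rcases ht with ht | ht
  · exact Or.inl (mem_of_eq (q := 0) (by simp) ht (by push_cast; ring))
  · exact Or.inr (mem_of_eq (q := 3) (by simp) ht (by push_cast; ring))
  · exact Or.inr (mem_of_eq (q := 5) (by simp) ht (by push_cast; ring))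
  · exact Or.inl (mem_of_eq (q := 0) (by simp) ht (by push_cast; ring))
  · exact Or.inl (mem_of_eq (q := 2) (by simp) ht (by push_cast; ring))
  · exact Or.inr (mem_of_eq (q := 5) (by simp) ht (by push_cast; ring))
  · exact Or.inl (mem_of_eq (q := 3) (by simp) ht (by push_cast; ring))
  · exact Or.inl (mem_of_eq (q := 2) (by simp) ht (by push_cast; ring))

lemma Icc_three_quarters_subset : Icc (3 / 4) 1 ⊆ GN := by
  rintro t ⟨ht0, ht1⟩
  rcases Icc_subset_union (a := 4 * t - 3) ⟨by linarith, by linarith⟩ with h | h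
  · exact mem_of_eq (q := 3) (by simp) h (by ring)
  · exact mem_of_eq (q := 2) (by simp) h (by ring)

lemma isOpenMap_digit (q : ℝ) : IsOpenMap fun y : ℝ => (q + y) / 4 := by
  convert ((Homeomorph.addLeft q).trans (Homeomorph.mulRight₀ (4 : ℝ)⁻¹ (by norm_num))).isOpenMap
    using 1
  ext y
  simp [div_eq_mul_inv]

theorem mem_interior_of_three_quarters_lt_fract {N : ℕ} :
    ∀ x ∈ GN, 3 / 4 < Int.fract (x * 4 ^ N) → x ∈ interior GN := by
  induction N with
  | zero =>
    intro x hx hfract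
    rw [pow_zero, mul_one] at hfract
    have hsplit := Int.floor_add_fract x
    rcases floor_eq_zero_or_one hx with h | h
    · rw [h, Int.cast_zero, zero_add] at hsplit
      exact mem_interior.mpr ⟨Ioo (3 / 4) 1, Ioo_subset_Icc_self.trans Icc_three_quarters_subset,
        isOpen_Ioo, hsplit ▸ hfract, hsplit ▸ Int.fract_lt_one x⟩
    · rw [h, Int.cast_one] at hsplit
      linarith [(subset_Icc hx).2]
  | succ N ih =>
    intro x hx hfract
    obtain ⟨q, hq, y, hy, rfl⟩ := mem_iff.mp hx
    obtain ⟨k, rfl⟩ : ∃ k : ℕ, q = k := by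
      rcases hq with rfl | rfl | rfl | rfl
      exacts [⟨0, by simp⟩, ⟨2, by simp⟩, ⟨3, by simp⟩, ⟨5, by simp⟩]
    have hscale : (k + y) / 4 * 4 ^ (N + 1) = y * 4 ^ N + ((k * 4 ^ N : ℕ) : ℝ) := by
      push_cast; ring
    rw [hscale, Int.fract_add_natCast] at hfract
    have hsub : (fun y : ℝ => (k + y) / 4) '' GN ⊆ GN := by
      rintro _ ⟨z, hz, rfl⟩
      exact mem_of_eq hq hz rfl
    exact interior_mono hsub ((isOpenMap_digit _).image_interior_subset _
      (mem_image_of_mem _ (ih y hy hfract)))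

end GN

namespace E

lemma subset_Icc : E ⊆ Icc 0 (2 / 3) := by
  have h := digitSet_ternary_subset_Icc (b := 4) (by norm_num)
  norm_num at h
  exact h

lemma mem_iff {x : ℝ} : x ∈ E ↔ ∃ e ∈ ({0, 1, 2} : Set ℝ), ∃ y ∈ E, x = (e + y) / 4 :=
  digitSet.mem_iff (by norm_num)

theorem fract_mem_of_forall_fract_lt {x : ℝ} (hx : ∀ N : ℕ, Int.fract (x * 4 ^ N) < 3 / 4) :
    Int.fract x ∈ E := by
  refine digitSet.subset_of_forall_exists
    (S := Int.fract '' {x | ∀ N : ℕ, Int.fract (x * 4 ^ N) < 3 / 4})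
    (by norm_num) ((Metric.isBounded_Icc (0 : ℝ) 1).subset ?_) ?_ ⟨x, hx, rfl⟩
  · rintro _ ⟨y, -, rfl⟩
    exact ⟨Int.fract_nonneg y, (Int.fract_lt_one y).le⟩
  rintro _ ⟨y, hy, rfl⟩
  have hy0 : Int.fract y < 3 / 4 := by simpa using hy 0
  have hd0 : 0 ≤ ⌊4 * Int.fract y⌋ := Int.floor_nonneg.mpr (by linarith [Int.fract_nonneg y])
  have hd3 : ⌊4 * Int.fract y⌋ < 3 := Int.floor_lt.mpr (by push_cast; linarith)
  have hfract : Int.fract (4 * Int.fract y) = Int.fract (4 * y) := by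
    rw [← Int.self_sub_floor y, mul_sub, ← Int.cast_ofNat, ← Int.cast_mul, Int.fract_sub_intCast]
  refine ⟨⌊4 * Int.fract y⌋, ?_, Int.fract (4 * y), ⟨4 * y, fun N => ?_, rfl⟩, ?_⟩
  · obtain h | h | h : ⌊4 * Int.fract y⌋ = 0 ∨ ⌊4 * Int.fract y⌋ = 1 ∨ ⌊4 * Int.fract y⌋ = 2 := by
      omega
    all_goals simp [h]
  · simpa [pow_succ, mul_comm, mul_left_comm, mul_assoc] using hy (N + 1)
  · rw [← hfract, Int.floor_add_fract]
    ring

end E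

theorem frontier_GN_subset :
    frontier GN ⊆ E ∪ (· + 1) '' E ∪ ⋃ N : ℕ, range fun m : ℤ => (m : ℝ) / 4 ^ N := by
  intro x hx
  have hxGN : x ∈ GN := GN.isClosed.frontier_subset hx
  by_cases hdyadic : ∃ N : ℕ, Int.fract (x * 4 ^ N) = 3 / 4
  · obtain ⟨N, hN⟩ := hdyadic
    refine Or.inr (mem_iUnion.mpr ⟨N + 1, 4 * ⌊x * 4 ^ N⌋ + 3, ?_⟩)
    have := Int.floor_add_fract (x * 4 ^ N)
    rw [hN] at this
    push_cast
    rw [pow_succ]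
    field_simp
    linarith
  rw [not_exists] at hdyadic
  have hlt (N : ℕ) : Int.fract (x * 4 ^ N) < 3 / 4 :=
    lt_of_le_of_ne (not_lt.mp fun h => hx.2 (GN.mem_interior_of_three_quarters_lt_fract x hxGN h))
      (hdyadic N)
  have hE := E.fract_mem_of_forall_fract_lt hlt
  have hsplit := Int.floor_add_fract x
  rcases GN.floor_eq_zero_or_one hxGN with h | h
  · rw [h, Int.cast_zero, zero_add] at hsplit
    exact Or.inl (Or.inl (hsplit ▸ hE))
  · rw [h, Int.cast_one] at hsplit
    exact Or.inl (Or.inr ⟨_, hE, by simp only; linarith⟩)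

theorem E_subset_GN : E ⊆ GN := by
  refine (subset_union_left (t := (· + 1) '' E)).trans
    (digitSet.subset_of_forall_exists (by norm_num) ((Metric.isBounded_Icc (0 : ℝ) (5 / 3)).subset
      ?_) ?_)
  · rintro _ (hs | ⟨s, hs, rfl⟩) <;> obtain ⟨h0, h1⟩ := E.subset_Icc hs <;>
      constructor <;> linarith
  rintro _ (hs | ⟨s, hs, rfl⟩) <;> obtain ⟨e, he, y, hy, rfl⟩ := E.mem_iff.mp hs <;>
    rcases he with rfl | rfl | rfl
  · exact ⟨0, by simp, y, Or.inl hy, by ring⟩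
  · exact ⟨0, by simp, y + 1, Or.inr ⟨y, hy, rfl⟩, by ring⟩
  · exact ⟨2, by simp, y, Or.inl hy, by ring⟩
  · exact ⟨3, by simp, y + 1, Or.inr ⟨y, hy, rfl⟩, by ring⟩
  · exact ⟨5, by simp, y, Or.inl hy, by ring⟩
  · exact ⟨5, by simp, y + 1, Or.inr ⟨y, hy, rfl⟩, by ring⟩

/-- Since remainders in `GN` lie in `[0, 5 / 3]` and `y ∈ [0, 1)`, the first `GN`-digit of
`(e + y) / 4 + c` is forced, and it leaves the carry `c' = (c + e) mod 2` on `y`. -/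
theorem exists_carry_mem_GN {c e : ℝ} (hc : c ∈ ({0, 1} : Set ℝ)) (he : e ∈ ({0, 1, 2} : Set ℝ)) :
    ∃ c' ∈ ({0, 1} : Set ℝ), ∀ y ∈ Ico (0 : ℝ) 1, (e + y) / 4 + c ∈ GN → y + c' ∈ GN := by
  have key (c' : ℝ) (hforced : ∀ q ∈ ({0, 2, 3, 5} : Set ℝ),
      -1 < e + 4 * c - q → e + 4 * c - q ≤ 5 / 3 → e + 4 * c - q = c') :
      ∀ y ∈ Ico (0 : ℝ) 1, (e + y) / 4 + c ∈ GN → y + c' ∈ GN := by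
    rintro y ⟨hy0, hy1⟩ hmem
    obtain ⟨q, hq, z, hz, hzeq⟩ := GN.mem_iff.mp hmem
    obtain ⟨hz0, hz1⟩ := GN.subset_Icc hz
    have := hforced q hq (by linarith) (by linarith)
    convert hz using 1
    linarith
  rcases hc with rfl | rfl <;> rcases he with rfl | rfl | rfl <;>
    [use 0; use 1; use 0; use 1; use 0; use 1] <;>
    refine ⟨by simp, key _ fun q hq h1 h2 => ?_⟩ <;>
    rcases hq with rfl | rfl | rfl | rfl <;> norm_num at *

theorem exists_notMem_GN_near (n : ℕ) : ∀ x ∈ E, ∀ c ∈ ({0, 1} : Set ℝ),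
    ∃ z ∈ Ico (0 : ℝ) 1, |x - z| ≤ 1 / 4 ^ n ∧ z + c ∉ GN := by
  induction n with
  | zero =>
    intro x hx c hc
    obtain ⟨hx0, hx1⟩ := E.subset_Icc hx
    -- `11 / 24` lies in the gap `(5 / 12, 1 / 2)` of `GN`, and `3 / 4 + 1 > 5 / 3`.
    rcases hc with rfl | rfl
    · refine ⟨11 / 24, by norm_num, by rw [abs_le]; constructor <;> norm_num <;> linarith,
        fun h => ?_⟩
      obtain ⟨q, hq, w, hw, hweq⟩ := GN.mem_iff.mp h
      obtain ⟨hw0, hw1⟩ := GN.subset_Icc hw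
      rcases hq with rfl | rfl | rfl | rfl <;> linarith
    · refine ⟨3 / 4, by norm_num, by rw [abs_le]; constructor <;> norm_num <;> linarith,
        fun h => ?_⟩
      linarith [(GN.subset_Icc h).2]
  | succ n ih =>
    intro x hx c hc
    obtain ⟨e, he, y, hy, rfl⟩ := E.mem_iff.mp hx
    obtain ⟨c', hc', hcarry⟩ := exists_carry_mem_GN hc he
    obtain ⟨z, ⟨hz0, hz1⟩, hdist, hz⟩ := ih y hy c' hc'
    have he2 : 0 ≤ e ∧ e ≤ 2 := by rcases he with rfl | rfl | rfl <;> norm_num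
    refine ⟨(e + z) / 4, ⟨by linarith, by linarith⟩, ?_, fun h => hz (hcarry z ⟨hz0, hz1⟩ h)⟩
    rw [← sub_div, add_sub_add_left_eq_sub, abs_div, abs_of_pos (by norm_num : (0 : ℝ) < 4),
      pow_succ, ← div_div]
    exact div_le_div_of_nonneg_right hdist (by norm_num)

theorem E_subset_frontier_GN : E ⊆ frontier GN := by
  intro x hx
  rw [frontier_eq_closure_inter_closure]
  refine ⟨subset_closure (E_subset_GN hx), Metric.mem_closure_iff.mpr fun ε hε => ?_⟩
  obtain ⟨n, hn⟩ := exists_pow_lt_of_lt_one hε (by norm_num : (1 / 4 : ℝ) < 1)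
  obtain ⟨z, -, hdist, hz⟩ := exists_notMem_GN_near n x hx 0 (by simp)
  refine ⟨z, by simpa using hz, ?_⟩
  rw [div_pow, one_pow] at hn
  rw [Real.dist_eq]
  linarith

theorem dimH_frontier_GN :
    dimH (frontier GN) = ENNReal.ofReal (Real.log 3 / Real.log 4) := by
  have hdyadic : (⋃ N : ℕ, range fun m : ℤ => (m : ℝ) / 4 ^ N).Countable :=
    countable_iUnion fun _ => countable_range _
  refine le_antisymm ?_ (dimH_E ▸ dimH_mono E_subset_frontier_GN)
  calc dimH (frontier GN)
      ≤ dimH (E ∪ (· + 1) '' E ∪ ⋃ N : ℕ, range fun m : ℤ => (m : ℝ) / 4 ^ N) :=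
        dimH_mono frontier_GN_subset
    _ = dimH E := by
      rw [dimH_union, dimH_union, (isometry_add_right 1).dimH_image, dimH_countable hdyadic]
      simp
    _ = _ := dimH_E
end
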